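/- Let n, m, d, d' be positive integers, let B ∈ Matrix (Fin n) (Fin m) ℝ be an incidence matrix, H ∈ Matrix (Fin n) (Fin d) ℝ a cochain on the lower-rank cells, W ∈ Matrix (Fin d) (Fin d') ℝ a shared weight matrix, and φ : ℝ → ℝ. Then for all permutations σ of Fin n and τ of Fin m, the upward incidence-convolution transport T↑(B, H) = φ[Bᵀ * H * W] is reindexing-equivariant: φ[(P_σ * B * P_τᵀ)ᵀ * (P_σ * H) * W] = P_τ * φ[Bᵀ * H * W]. -/

import Mathlib

/-!
Transposing the reindexed incidence matrix gives `P_τ * Bᵀ * P_σᵀ`, and `P_σᵀ * P_σ = 1`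
cancels the reindexing of `H`. What remains is `φ[P_τ * M] = P_τ * φ[M]`, which holds for any
`φ` because left multiplication by a permutation matrix only reorders the rows of `M`.
-/

open Matrix

/-- The `n × n` permutation matrix of a permutation `σ` of `Fin n`:
left multiplication by `permMat σ` permutes rows according to `σ`. -/
noncomputable def permMat {n : ℕ} (σ : Equiv.Perm (Fin n)) : Matrix (Fin n) (Fin n) ℝ :=
  fun i j => if σ j = i then 1 else 0

section permMat

variable {n : ℕ} (σ : Equiv.Perm (Fin n))

theorem permMat_eq_permMatrix : permMat σ = σ⁻¹.permMatrix ℝ := by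
  ext i j
  simp only [permMat, PEquiv.toMatrix_apply, Equiv.toPEquiv_apply, Option.mem_def,
    Option.some_inj, Equiv.Perm.inv_def, Equiv.symm_apply_eq]
  exact if_congr eq_comm rfl rfl

theorem transpose_permMat_mul_permMat : (permMat σ)ᵀ * permMat σ = 1 := by
  rw [permMat_eq_permMatrix, transpose_permMatrix, ← permMatrix_mul, mul_inv_cancel,
    permMatrix_one]

theorem map_permMat_mul {ι : Type*} (M : Matrix (Fin n) ι ℝ) (φ : ℝ → ℝ) :
    (permMat σ * M).map φ = permMat σ * M.map φ := by
  simp only [permMat_eq_permMatrix, Equiv.Perm.permMatrix, PEquiv.toMatrix_toPEquiv_mul,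
    submatrix_map]

end permMat

theorem upward_incidence_convolution_equivariant_general (n m d d' : ℕ)
    (B : Matrix (Fin n) (Fin m) ℝ)
    (H : Matrix (Fin n) (Fin d) ℝ)
    (W : Matrix (Fin d) (Fin d') ℝ)
    (φ : ℝ → ℝ)
    (σ : Equiv.Perm (Fin n)) (τ : Equiv.Perm (Fin m)) :
    ((permMat σ * B * (permMat τ)ᵀ)ᵀ * (permMat σ * H) * W).map φ
      = permMat τ * ((Bᵀ * H * W).map φ) := by
  calc ((permMat σ * B * (permMat τ)ᵀ)ᵀ * (permMat σ * H) * W).map φ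
      = (permMat τ * (Bᵀ * ((permMat σ)ᵀ * permMat σ) * H * W)).map φ := by
        simp only [transpose_mul, transpose_transpose, Matrix.mul_assoc]
    _ = permMat τ * ((Bᵀ * H * W).map φ) := by
        rw [transpose_permMat_mul_permMat, Matrix.mul_one, map_permMat_mul]

/-- The upward incidence-convolution transport
`T↑(B, H) = φ[Bᵀ * H * W]` is reindexing-equivariant: under a simultaneous
reindexing of lower-rank cells by `σ` and higher-rank cells by `τ`
(`B ↦ P_σ * B * P_τᵀ`, `H ↦ P_σ * H`),
`φ[(P_σ * B * P_τᵀ)ᵀ * (P_σ * H) * W] = P_τ * φ[Bᵀ * H * W]`. -/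
theorem upward_incidence_convolution_equivariant (n m d d' : ℕ)
    (hn : 0 < n) (hm : 0 < m) (hd : 0 < d) (hd' : 0 < d')
    (B : Matrix (Fin n) (Fin m) ℝ)
    (H : Matrix (Fin n) (Fin d) ℝ)
    (W : Matrix (Fin d) (Fin d') ℝ)
    (φ : ℝ → ℝ)
    (σ : Equiv.Perm (Fin n)) (τ : Equiv.Perm (Fin m)) :
    ((permMat σ * B * (permMat τ)ᵀ)ᵀ * (permMat σ * H) * W).map φ
      = permMat τ * ((Bᵀ * H * W).map φ) :=
  upward_incidence_convolution_equivariant_general n m d d' B H W φ σ τ
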